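/- Let q be a real number with 0 < q ≤ 1/2. Let n₁, n₂ be positive integers with n = n₁ + n₂ ≥ 2, let b₁, b₂ be positive integers with b = b₁ + b₂, and let a be an integer with a ≥ b. Define G = q·log max{n₁, n₂} + log 2 + min{−q·log q, e⁻¹}, H = q·log n + min{−q·log q, e⁻¹}, and L = (q/a)·(b₁·(ξ_b − ξ_{b₁}) + b₂·(ξ_b − ξ_{b₂})), where ξ_n = Σ_{j=1}^n 1/j. Then G ≥ H + L; consequently, in Theorem 2's setting, whenever q_A ≤ 1/2 for all atoms A, the martingale increment bound ζ_k = max{G_k, H_k + L_k} equals G_k for every k. -/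

import Mathlib

/-- The `n`-th harmonic number `ξ_n = Σ_{j=1}^n 1/j`. -/
noncomputable def xi (n : ℕ) : ℝ := ∑ j ∈ Finset.range n, (1 : ℝ) / (j + 1)

/-!
Two estimates give the claim. First, since `1/(k+1) ≤ log (k+1) - log k`, the harmonic
differences are dominated by logarithmic ones, so the sum in `L` is at most the
unnormalised binary entropy `b₁ log (b/b₁) + b₂ log (b/b₂) ≤ b log 2 ≤ a log 2`; hence
`L ≤ q log 2`. Second, `n₁ + n₂ ≤ 2 max n₁ n₂` gives `q log n ≤ q log max n₁ n₂ + q log 2`.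
Together `H + L ≤ G - (1 - 2q) log 2`, and `q ≤ 1/2`.
-/

open Real

lemma xi_succ (n : ℕ) : xi (n + 1) = xi n + 1 / (n + 1) := by
  simp [xi, Finset.sum_range_succ]

lemma xi_sub_xi_le_log_sub_log {m n : ℕ} (hm : 1 ≤ m) (hmn : m ≤ n) :
    xi n - xi m ≤ log n - log m := by
  induction n, hmn using Nat.le_induction with
  | base => simp
  | succ n hmn ih =>
    have hn : (0 : ℝ) < n := by exact_mod_cast hm.trans hmn
    have hstep : 1 / ((n : ℝ) + 1) ≤ log (n + 1) - log n := by
      have h := one_sub_inv_le_log_of_pos (div_pos (by positivity : (0 : ℝ) < n + 1) hn)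
      rwa [log_div (by positivity) hn.ne', inv_div, one_sub_div (by positivity),
        add_sub_cancel_left] at h
    push_cast
    rw [xi_succ]
    linarith

lemma mul_xi_sub_xi_le_mul_log_sub_log {m n : ℕ} (hmn : m ≤ n) :
    m * (xi n - xi m) ≤ m * (log n - log m) := by
  rcases Nat.eq_zero_or_pos m with rfl | hm
  · simp
  · exact mul_le_mul_of_nonneg_left (xi_sub_xi_le_log_sub_log hm hmn) (Nat.cast_nonneg m)

/-- Convexity of `t ↦ t log t` at the midpoint of `x` and `y`. -/
lemma mul_log_sub_add_mul_log_sub_le_mul_log_two {x y : ℝ} (hx : 0 ≤ x) (hy : 0 ≤ y) :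
    x * (log (x + y) - log x) + y * (log (x + y) - log y) ≤ (x + y) * log 2 := by
  have hmid := convexOn_mul_log.2 (Set.mem_Ici.2 hx) (Set.mem_Ici.2 hy)
    (by norm_num : (0 : ℝ) ≤ 1 / 2) (by norm_num : (0 : ℝ) ≤ 1 / 2) (by norm_num)
  simp only [smul_eq_mul] at hmid
  rcases (add_nonneg hx hy).eq_or_lt with hxy | hxy
  · obtain ⟨rfl, rfl⟩ : x = 0 ∧ y = 0 := ⟨by linarith, by linarith⟩
    simp
  · rw [← mul_add, ← mul_add, one_div_mul_eq_div, log_div hxy.ne' two_ne_zero] at hmid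
    linarith

lemma harmonic_split_le_mul_log_two (b₁ b₂ : ℕ) :
    (b₁ : ℝ) * (xi (b₁ + b₂) - xi b₁) + (b₂ : ℝ) * (xi (b₁ + b₂) - xi b₂)
      ≤ (b₁ + b₂ : ℕ) * log 2 := by
  have h₁ := mul_xi_sub_xi_le_mul_log_sub_log (Nat.le_add_right b₁ b₂)
  have h₂ := mul_xi_sub_xi_le_mul_log_sub_log (Nat.le_add_left b₂ b₁)
  have hent := mul_log_sub_add_mul_log_sub_le_mul_log_two (Nat.cast_nonneg (α := ℝ) b₁)
    (Nat.cast_nonneg b₂)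
  push_cast at h₁ h₂ ⊢
  linarith

lemma log_add_le_log_two_add_log_max {x y : ℝ} (hx : 0 ≤ x) (hy : 0 ≤ y) :
    log (x + y) ≤ log 2 + log (max x y) := by
  rcases (add_nonneg hx hy).eq_or_lt with hxy | hxy
  · obtain ⟨rfl, rfl⟩ : x = 0 ∧ y = 0 := ⟨by linarith, by linarith⟩
    simp [(log_pos one_lt_two).le]
  · have hsum : x + y ≤ 2 * max x y := by linarith [le_max_left x y, le_max_right x y]
    rw [← log_mul two_ne_zero (by linarith)]
    exact log_le_log hxy hsum

theorem G_ge_H_add_L_general (q : ℝ) (hq0 : 0 < q) (hq : q ≤ 1 / 2)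
    (n₁ n₂ : ℕ)
    (b₁ b₂ : ℕ)
    (a : ℕ) (hab : b₁ + b₂ ≤ a)
    (G H L : ℝ)
    (hG : G = q * Real.log ((max n₁ n₂ : ℕ) : ℝ) + Real.log 2 +
      min (-q * Real.log q) (Real.exp 1)⁻¹)
    (hH : H = q * Real.log ((n₁ + n₂ : ℕ) : ℝ) +
      min (-q * Real.log q) (Real.exp 1)⁻¹)
    (hL : L = (q / (a : ℝ)) * ((b₁ : ℝ) * (xi (b₁ + b₂) - xi b₁) +
      (b₂ : ℝ) * (xi (b₁ + b₂) - xi b₂))) :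
    H + L ≤ G ∧ max G (H + L) = G := by
  have hlog2 : 0 < log 2 := log_pos one_lt_two
  have hL2 : L ≤ q * log 2 := by
    have hsum := (harmonic_split_le_mul_log_two b₁ b₂).trans
      (mul_le_mul_of_nonneg_right (Nat.cast_le.2 hab) hlog2.le)
    rw [hL, div_mul_eq_mul_div, mul_div_assoc]
    exact mul_le_mul_of_nonneg_left
      (div_le_of_le_mul₀ (Nat.cast_nonneg a) hlog2.le (by linarith)) hq0.le
  have hlogn : q * log ((n₁ + n₂ : ℕ) : ℝ) ≤ q * log 2 + q * log ((max n₁ n₂ : ℕ) : ℝ) := by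
    rw [← mul_add, Nat.cast_add, Nat.cast_max]
    exact mul_le_mul_of_nonneg_left
      (log_add_le_log_two_add_log_max (Nat.cast_nonneg n₁) (Nat.cast_nonneg n₂)) hq0.le
  have hle : H + L ≤ G := by
    have hq2 : q * log 2 ≤ 1 / 2 * log 2 := mul_le_mul_of_nonneg_right hq hlog2.le
    rw [hG, hH]
    linarith
  exact ⟨hle, max_eq_left hle⟩

/-- with `0 < q ≤ 1/2`, positive integers `n₁, n₂` with
`n = n₁ + n₂ ≥ 2`, positive integers `b₁, b₂` with `b = b₁ + b₂ ≤ a`, and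
`G = q·log max{n₁,n₂} + log 2 + min{−q·log q, e⁻¹}`,
`H = q·log n + min{−q·log q, e⁻¹}`,
`L = (q/a)·(b₁·(ξ_b − ξ_{b₁}) + b₂·(ξ_b − ξ_{b₂}))`,
we have `G ≥ H + L`; consequently `max{G, H + L} = G`. -/
theorem G_ge_H_add_L (q : ℝ) (hq0 : 0 < q) (hq : q ≤ 1 / 2)
    (n₁ n₂ : ℕ) (hn₁ : 1 ≤ n₁) (hn₂ : 1 ≤ n₂) (hn : 2 ≤ n₁ + n₂)
    (b₁ b₂ : ℕ) (hb₁ : 1 ≤ b₁) (hb₂ : 1 ≤ b₂)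
    (a : ℕ) (hab : b₁ + b₂ ≤ a)
    (G H L : ℝ)
    (hG : G = q * Real.log ((max n₁ n₂ : ℕ) : ℝ) + Real.log 2 +
      min (-q * Real.log q) (Real.exp 1)⁻¹)
    (hH : H = q * Real.log ((n₁ + n₂ : ℕ) : ℝ) +
      min (-q * Real.log q) (Real.exp 1)⁻¹)
    (hL : L = (q / (a : ℝ)) * ((b₁ : ℝ) * (xi (b₁ + b₂) - xi b₁) +
      (b₂ : ℝ) * (xi (b₁ + b₂) - xi b₂))) :
    H + L ≤ G ∧ max G (H + L) = G :=
  G_ge_H_add_L_general q hq0 hq n₁ n₂ b₁ b₂ a hab G H L hG hH hL
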